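/- arXiv:1504.03615 — 3 statements merged into one kernel-verified Lean document; each statement's English description precedes it below -/
import Mathlib

section
/- Let x < y < z be positive integers. Then in B one has the identity H_{xy} H_{xz} H_{yz} = H_{yz} − ε_x ε_y H_{xz} + ε_x ε_y H_{xy}, where H_{uv} = (T_v − δ_uδ_vT_u)/(T_v + δ_uδ_vT_u) for u < v. -/
/-!
Clearing the three denominators turns the identity into a polynomial identity in `T_x, T_y, T_z`
and the `δ`'s, which holds modulo `δ_x² = δ_x` and `δ_y² = δ_y`. The denominators are
non-zero-divisors because the shear `T_v ↦ T_v + c T_u` is an automorphism of the polynomial ring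
carrying the regular element `T_v` to `T_v + c T_u`; hence they are units in `B`.
-/

/-- The variables `T x` of the polynomial ring `A[T₁, T₂, …]` (variables indexed by
positive integers); `Tvar A x = 0` for `x = 0` (unused here). -/
noncomputable def Tvar (A : Type*) [CommRing A] : ℕ → MvPolynomial {x : ℕ // 1 ≤ x} A :=
  fun x => if h : 1 ≤ x then MvPolynomial.X ⟨x, h⟩ else 0

open MvPolynomial
open scoped nonZeroDivisors

theorem Tvar_of_one_le (A : Type*) [CommRing A] {x : ℕ} (hx : 1 ≤ x) :
    Tvar A x = X ⟨x, hx⟩ :=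
  dif_pos hx

theorem MvPolynomial.X_add_C_mul_X_mem_nonZeroDivisors {R σ : Type*} [CommRing R] {i j : σ}
    (hji : j ≠ i) (c : R) : X i + C c * X j ∈ (MvPolynomial σ R)⁰ := by
  classical
  let shear (a : R) : MvPolynomial σ R →ₐ[R] MvPolynomial σ R :=
    aeval (Function.update X i (X i + C a * X j))
  have shear_neg_comp (a : R) : (shear (-a)).comp (shear a) = AlgHom.id R _ := by
    ext k
    by_cases hk : k = i
    · subst hk; simp [shear, hji]
    · simp [shear, hk]
  let e : MvPolynomial σ R ≃ₐ[R] MvPolynomial σ R :=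
    AlgEquiv.ofAlgHom (shear c) (shear (-c)) (by simpa using shear_neg_comp (-c))
      (shear_neg_comp c)
  have he : e (X i) = X i + C c * X j := by simp [e, shear]
  rw [← he, ← MulEquivClass.map_nonZeroDivisors e]
  exact Submonoid.mem_map_of_mem _ isRegular_X.mem_nonZeroDivisors

theorem cubic_identity_cleared {R : Type*} [CommRing R] {dx dy : R} (dz X Y Z : R)
    (hdx : IsIdempotentElem dx) (hdy : IsIdempotentElem dy) :
    (Y - dx * dy * X) * ((Z - dx * dz * X) * (Z - dy * dz * Y))
      = (Z - dy * dz * Y) * ((Y + dx * dy * X) * (Z + dx * dz * X))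
        - (2 * dx - 1) * (2 * dy - 1) *
            ((Z - dx * dz * X) * ((Y + dx * dy * X) * (Z + dy * dz * Y)))
        + (2 * dx - 1) * (2 * dy - 1) *
            ((Y - dx * dy * X) * ((Z + dx * dz * X) * (Z + dy * dz * Y))) := by
  linear_combination 4 * X * (dy * Z ^ 2 - dy * dz ^ 2 * Y ^ 2 + (1 - dy) * dz * Y * Z) * hdx.eq
    + 4 * X * ((2 * dx ^ 2 - dx) * (Z ^ 2 - dz ^ 2 * Y ^ 2)
      + (dx ^ 2 * (1 + 2 * dy) - dx * dy) * dz * Y * Z) * hdy.eq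

theorem cubic_identity_of_mul_eq {R : Type*} [CommRing R] {dx dy dz X Y Z Hxy Hxz Hyz : R}
    (hdx : IsIdempotentElem dx) (hdy : IsIdempotentElem dy)
    (hHxy : Hxy * (Y + dx * dy * X) = Y - dx * dy * X)
    (hHxz : Hxz * (Z + dx * dz * X) = Z - dx * dz * X)
    (hHyz : Hyz * (Z + dy * dz * Y) = Z - dy * dz * Y)
    (hxy_mem : Y + dx * dy * X ∈ R⁰) (hxz_mem : Z + dx * dz * X ∈ R⁰)
    (hyz_mem : Z + dy * dz * Y ∈ R⁰) :
    Hxy * Hxz * Hyz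
      = Hyz - (2 * dx - 1) * (2 * dy - 1) * Hxz + (2 * dx - 1) * (2 * dy - 1) * Hxy := by
  rw [← mul_cancel_right_mem_nonZeroDivisors (mul_mem hxy_mem (mul_mem hxz_mem hyz_mem))]
  linear_combination
    (Hxz * (Z + dx * dz * X) * (Hyz * (Z + dy * dz * Y))
        - (2 * dx - 1) * (2 * dy - 1) * ((Z + dx * dz * X) * (Z + dy * dz * Y))) * hHxy
    + ((Y - dx * dy * X) * (Hyz * (Z + dy * dz * Y))
        + (2 * dx - 1) * (2 * dy - 1) * ((Y + dx * dy * X) * (Z + dy * dz * Y))) * hHxz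
    + ((Y - dx * dy * X) * (Z - dx * dz * X)
        - (Y + dx * dy * X) * (Z + dx * dz * X)) * hHyz
    + cubic_identity_cleared dz X Y Z hdx hdy

/-- `A` is a commutative ring with elements `δ x` for positive `x` satisfying
`δ x ^ 2 = δ x`; `ε x = 2 δ x - 1`.  `B` is the localization of `A[T₁, T₂, …]` at the
multiplicative set of non-zero-divisors, with
`H u v = (T v - δ u δ v T u)/(T v + δ u δ v T u)` for `u < v` positive, characterized by
`H u v * (T v + δ u δ v T u) = T v - δ u δ v T u`.  Then for positive integers `x < y < z`:
`H x y * H x z * H y z = H y z - ε x ε y H x z + ε x ε y H x y`. -/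
theorem cubic_H_identity
    {A : Type*} [CommRing A]
    (δ : ℕ → A) (hδ : ∀ u, 1 ≤ u → δ u * δ u = δ u)
    (B : Type*) [CommRing B] [Algebra (MvPolynomial {x : ℕ // 1 ≤ x} A) B]
    [IsLocalization (nonZeroDivisors (MvPolynomial {x : ℕ // 1 ≤ x} A)) B]
    (H : ℕ → ℕ → B)
    (hH : ∀ u v, 1 ≤ u → u < v →
      H u v * algebraMap (MvPolynomial {x : ℕ // 1 ≤ x} A) B
          (Tvar A v + MvPolynomial.C (δ u * δ v) * Tvar A u)
        = algebraMap (MvPolynomial {x : ℕ // 1 ≤ x} A) B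
            (Tvar A v - MvPolynomial.C (δ u * δ v) * Tvar A u))
    (x y z : ℕ) (hx : 1 ≤ x) (hxy : x < y) (hyz : y < z) :
    H x y * H x z * H y z
      = H y z
        - algebraMap (MvPolynomial {x : ℕ // 1 ≤ x} A) B
            (MvPolynomial.C ((2 * δ x - 1) * (2 * δ y - 1))) * H x z
        + algebraMap (MvPolynomial {x : ℕ // 1 ≤ x} A) B
            (MvPolynomial.C ((2 * δ x - 1) * (2 * δ y - 1))) * H x y := by
  set F := algebraMap (MvPolynomial {x : ℕ // 1 ≤ x} A) B
  have hy : 1 ≤ y := hx.trans hxy.le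
  have denom_mem : ∀ u v, 1 ≤ u → u < v →
      F (Tvar A v + C (δ u * δ v) * Tvar A u) ∈ B⁰ := by
    intro u v hu huv
    have hv : 1 ≤ v := hu.trans huv.le
    rw [Tvar_of_one_le A hu, Tvar_of_one_le A hv]
    refine (IsLocalization.map_units B
      ⟨_, X_add_C_mul_X_mem_nonZeroDivisors ?_ _⟩).mem_nonZeroDivisors
    simpa [Subtype.ext_iff] using huv.ne
  have idem : ∀ u, 1 ≤ u → IsIdempotentElem (F (C (δ u))) :=
    fun u hu => IsIdempotentElem.map (hδ u hu) (F.comp C)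
  simp only [map_add, map_sub, map_mul, map_one, map_ofNat] at hH denom_mem ⊢
  have hxz : x < z := hxy.trans hyz
  exact cubic_identity_of_mul_eq (idem x hx) (idem y hy)
    (hH x y hx hxy) (hH x z hx hxz) (hH y z hy hyz)
    (denom_mem x y hx hxy) (denom_mem x z hx hxz) (denom_mem y z hy hyz)
end

section
/- For every p ∈ ℤ^n, the set of raising operator monomials m = (m_{ij})_{1≤i<j≤n} (families of nonnegative integers) such that R_m(p) ∈ P is finite. -/
/-!
Summing the coordinates `k+1, …, n` of `R_m(p)`, every `m i j` with `k < i < j` is added once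
and subtracted once, so only the entries with `i ≤ k < j` survive, all with a minus sign. Hence
`R_m(p) ∈ P` forces `m i j ≤ p (i+1) + ⋯ + p n`, and there are finitely many such bounded
families.
-/

/-- The action of the raising operator monomial `∏_{i<j} R_{ij}^{m i j}` on `p ∈ ℤ^n`
(indices `1, …, n`): it raises the `k`-th index by `Σ_{j>k} m k j` and lowers it by
`Σ_{i<k} m i k`. -/
def RapplyN (n : ℕ) (m : ℕ → ℕ → ℕ) (p : ℕ → ℤ) : ℕ → ℤ :=
  fun k => p k + (∑ j ∈ Finset.Icc (k + 1) n, (m k j : ℤ)) - ∑ i ∈ Finset.Icc 1 (k - 1), (m i k : ℤ)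

/-- The set `P ⊂ ℤ^n` of `p = (p 1, …, p n)` with `p k + p (k+1) + ⋯ + p n ≥ 0` for all
`1 ≤ k ≤ n`. -/
def PsetN (n : ℕ) : Set (ℕ → ℤ) :=
  {p | ∀ k, 1 ≤ k → k ≤ n → 0 ≤ ∑ j ∈ Finset.Icc k n, p j}

/-- A family of nonnegative integers indexed by the pairs `1 ≤ i < j ≤ n` (a raising
operator monomial), encoded as a function vanishing off that index set. -/
def IsRaisMon (n : ℕ) (m : ℕ → ℕ → ℕ) : Prop :=
  ∀ i j, ¬(1 ≤ i ∧ i < j ∧ j ≤ n) → m i j = 0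

open Finset

theorem Set.finite_Iic_of_finite_support {α : Type*} {t : α → ℕ}
    (ht : (Function.support t).Finite) : (Set.Iic t).Finite := by
  have := ht.to_subtype
  refine Set.Finite.of_finite_image (f := (Function.support t).domRestrict) ?_ ?_
  · refine (Set.Finite.pi (t := fun a : Function.support t => Set.Iic (t a))
      fun a => Set.finite_Iic (t a)).subset ?_
    rintro _ ⟨f, hf, rfl⟩ a -
    exact hf a
  · intro f hf g hg hfg
    funext a
    by_cases ha : a ∈ Function.support t
    · exact congrFun hfg ⟨a, ha⟩
    · have hta : t a = 0 := Function.notMem_support.mp ha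
      have hfa : f a ≤ t a := hf a
      have hga : g a ≤ t a := hg a
      omega

lemma sum_Icc_lowering_eq (n k : ℕ) (m : ℕ → ℕ → ℕ) :
    ∑ l ∈ Icc (k + 1) n, ∑ i ∈ Icc 1 (l - 1), (m i l : ℤ)
      = ∑ i ∈ Icc 1 k, ∑ j ∈ Icc (k + 1) n, (m i j : ℤ)
        + ∑ i ∈ Icc (k + 1) n, ∑ j ∈ Icc (i + 1) n, (m i j : ℤ) := by
  have hsplit : ∀ l ∈ Icc (k + 1) n, ∑ i ∈ Icc 1 (l - 1), (m i l : ℤ)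
      = ∑ i ∈ Icc 1 k, (m i l : ℤ) + ∑ i ∈ Icc (k + 1) (l - 1), (m i l : ℤ) := by
    intro l hl
    rw [mem_Icc] at hl
    rw [← sum_union (disjoint_left.mpr fun i hi hi' => by simp only [mem_Icc] at hi hi'; omega)]
    congr 1
    ext i
    simp only [mem_union, mem_Icc]
    omega
  rw [sum_congr rfl hsplit, sum_add_distrib, sum_comm]
  congr 1
  exact sum_comm' fun l i => by simp only [mem_Icc]; omega

lemma sum_Icc_RapplyN (n k : ℕ) (m : ℕ → ℕ → ℕ) (p : ℕ → ℤ) :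
    ∑ l ∈ Icc (k + 1) n, RapplyN n m p l
      = ∑ l ∈ Icc (k + 1) n, p l - ∑ i ∈ Icc 1 k, ∑ j ∈ Icc (k + 1) n, (m i j : ℤ) := by
  simp only [RapplyN, sum_sub_distrib, sum_add_distrib, sum_Icc_lowering_eq]
  ring

lemma le_sum_of_RapplyN_mem_PsetN {n : ℕ} {m : ℕ → ℕ → ℕ} {p : ℕ → ℤ}
    (hP : RapplyN n m p ∈ PsetN n) {i j : ℕ} (hi : 1 ≤ i) (hij : i < j) (hj : j ≤ n) :
    (m i j : ℤ) ≤ ∑ l ∈ Icc (i + 1) n, p l := by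
  have hcut := hP (i + 1) (by omega) (by omega)
  rw [sum_Icc_RapplyN] at hcut
  have hmij : (m i j : ℤ) ≤ ∑ i' ∈ Icc 1 i, ∑ j' ∈ Icc (i + 1) n, (m i' j' : ℤ) :=
    calc (m i j : ℤ) ≤ ∑ j' ∈ Icc (i + 1) n, (m i j' : ℤ) :=
          single_le_sum (f := fun j' => (m i j' : ℤ)) (fun _ _ => by positivity)
            (mem_Icc.mpr ⟨by omega, hj⟩)
      _ ≤ _ :=
          single_le_sum (f := fun i' => ∑ j' ∈ Icc (i + 1) n, (m i' j' : ℤ))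
            (fun _ _ => by positivity) (mem_Icc.mpr ⟨hi, le_rfl⟩)
  linarith

theorem raising_monomials_finite_general (n : ℕ) (p : ℕ → ℤ) :
    {m : ℕ → ℕ → ℕ | IsRaisMon n m ∧ RapplyN n m p ∈ PsetN n}.Finite := by
  let bound : ℕ × ℕ → ℕ := fun q =>
    if 1 ≤ q.1 ∧ q.1 < q.2 ∧ q.2 ≤ n then (∑ l ∈ Icc (q.1 + 1) n, p l).toNat else 0
  have hbound : (Function.support bound).Finite :=
    ((Set.finite_Icc 1 n).prod (Set.finite_Icc 1 n)).subset fun q hq => by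
      have hq' : 1 ≤ q.1 ∧ q.1 < q.2 ∧ q.2 ≤ n := by
        by_contra h
        exact hq (if_neg h)
      simp only [Set.mem_prod, Set.mem_Icc]
      omega
  refine ((Set.finite_Iic_of_finite_support hbound).preimage
    Function.uncurry_injective.injOn).subset ?_
  rintro m ⟨hm, hP⟩ ⟨i, j⟩
  simp only [bound, Function.uncurry_apply_pair]
  split_ifs with hij
  · have := le_sum_of_RapplyN_mem_PsetN hP hij.1 hij.2.1 hij.2.2
    omega
  · exact (hm i j hij).le

/-- For every `p ∈ ℤ^n`, the set of raising operator monomials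
`m = (m i j)_{1 ≤ i < j ≤ n}` such that `R_m(p) ∈ P` is finite. -/
theorem raising_monomials_finite (n : ℕ) (hn : 1 ≤ n) (p : ℕ → ℤ) :
    {m : ℕ → ℕ → ℕ | IsRaisMon n m ∧ RapplyN n m p ∈ PsetN n}.Finite :=
  raising_monomials_finite_general n p
end

section
/- Let λ = (λ_1 ≥ λ_2 ≥ ⋯ ≥ λ_ℓ ≥ 0) be a partition. Then the Schur determinant Δ_λ(c(1), …, c(ℓ)) = det(c(i)_{λ_i + j − i})_{1≤i,j≤ℓ} is equal to Σ_b (−1)^{|b|} ∏_{k=1}^ℓ c(k)_{R_b(λ)_k}, the sum over all families b = (b_{ij})_{1≤i<j≤ℓ} with b_{ij} ∈ {0,1}, where |b| = Σ b_{ij}; that is, Δ_λ(c(1), …, c(ℓ)) equals the evaluation of the raising operator R^{(ℓ)} = ∏_{1≤i<j≤ℓ} (1 − R_{ij}) applied to c(1)_{λ_1} ⋯ c(ℓ)_{λ_ℓ}. -/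
/-- `|b| = Σ_{1 ≤ i < j ≤ ℓ} b i j`. -/
def degFam (ℓ : ℕ) (b : ℕ → ℕ → ℕ) : ℕ :=
  ∑ i ∈ Finset.Icc 1 ℓ, ∑ j ∈ Finset.Icc (i + 1) ℓ, b i j


/-!
Write `x ^ a` for the monomial `single a 1` of the group ring `A[ℤ^ℕ]` and `e k` for the `k`-th
unit vector. The raising operator `∏_{i<j} (1 - R_{ij})` is multiplication by
`∏_{i<j} (1 - x ^ (e i - e j))`, and factoring `x ^ e j` out of `x ^ e j - x ^ e i` turns this
product into `x ^ (-δ)` times the Vandermonde determinant of the `x ^ e k`, where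
`δ = (0, 1, …, ℓ - 1)`. The Leibniz expansion of that determinant gives
`∏_{i<j} (1 - x ^ (e i - e j)) = Σ_σ sgn σ • x ^ (σ - id)`. Applying the linear functional
`x ^ a ↦ ∏_k c k (λ k + a k)`, the expansion of the left side over subsets of pairs becomes the
sum over `{0,1}`-families `b`, and the right side becomes the Leibniz expansion of the Schur
determinant.
-/

open Finset

theorem sum_sum_Ioi_eq_sum_nsmul {M : Type*} [AddCommMonoid M] {n : ℕ} (f : Fin n → M) :
    ∑ i, ∑ j ∈ Ioi i, f j = ∑ j : Fin n, (j : ℕ) • f j := by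
  rw [sum_comm' (t' := univ) (s' := fun j => Iio j) (by simp)]
  simp [Fin.card_Iio]

section GroupAlgebra

open AddMonoidAlgebra

variable {R G : Type*} [CommRing R]

theorem prod_one_sub_single_eq_sum_powerset [AddCommMonoid G] {ι : Type*} [DecidableEq ι]
    (s : Finset ι) (d : ι → G) :
    ∏ p ∈ s, (1 - single (d p) (1 : R)) =
      ∑ t ∈ s.powerset, single (∑ p ∈ t, d p) ((-1) ^ #t) := by
  have h (p : ι) : 1 - single (d p) (1 : R) = single (d p) (-1) + 1 := by
    rw [single_neg, neg_add_eq_sub]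
  simp_rw [h, prod_add, prod_const_one, mul_one, prod_single, prod_const]

theorem det_vandermonde_single [AddCommMonoid G] {n : ℕ} (x : Fin n → G) :
    (Matrix.vandermonde fun i => single (x i) (1 : R)).det =
      ∑ σ : Equiv.Perm (Fin n), single (∑ i, (σ i : ℕ) • x i) (Equiv.Perm.sign σ : R) := by
  rw [← Matrix.det_transpose, Matrix.det_apply]
  refine sum_congr rfl fun σ _ => ?_
  simp only [Matrix.transpose_apply, Matrix.vandermonde_apply, single_pow, one_pow, prod_single,
    prod_const_one]
  rw [Units.smul_def, ← Int.cast_smul_eq_zsmul R, smul_single', mul_one]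

theorem prod_one_sub_single_eq_sum_perm [AddCommGroup G] {n : ℕ} (x : Fin n → G) :
    ∏ i, ∏ j ∈ Ioi i, (1 - single (x i - x j) (1 : R)) =
      ∑ σ : Equiv.Perm (Fin n), single (∑ i, ((σ i : ℤ) - i) • x i) (Equiv.Perm.sign σ : R) := by
  set w := ∑ j : Fin n, (j : ℕ) • x j
  have hw : single w (1 : R) * ∏ i, ∏ j ∈ Ioi i, (1 - single (x i - x j) (1 : R)) =
      (Matrix.vandermonde fun i => single (x i) (1 : R)).det := by
    have hsub (i j : Fin n) : single (x j) (1 : R) - single (x i) 1 =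
        single (x j) 1 * (1 - single (x i - x j) 1) := by
      rw [mul_sub, mul_one, single_mul_single, add_sub_cancel, mul_one]
    simp_rw [Matrix.det_vandermonde, hsub, prod_mul_distrib, prod_single, prod_const_one,
      sum_sum_Ioi_eq_sum_nsmul, w]
  calc ∏ i, ∏ j ∈ Ioi i, (1 - single (x i - x j) (1 : R))
      = single (-w) 1 * (single w 1 * ∏ i, ∏ j ∈ Ioi i, (1 - single (x i - x j) (1 : R))) := by
        rw [← mul_assoc, single_mul_single, neg_add_cancel, mul_one, ← one_def, one_mul]
    _ = _ := by
        rw [hw, det_vandermonde_single, mul_sum]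
        refine sum_congr rfl fun σ _ => ?_
        rw [single_mul_single, one_mul]
        congr 1
        simp [w, sub_smul, sum_sub_distrib, neg_add_eq_sub]

theorem constr_basis_single {A : Type*} [CommSemiring A] (v : G → A) (a : G) (r : A) :
    (basis G A).constr A v (single a r) = r * v a := by
  rw [← mul_one r, ← smul_single', map_smul, ← basis_apply, Module.Basis.constr_basis, smul_eq_mul,
    mul_one]

end GroupAlgebra

local notation:max "𝐞" k:max => (Pi.single k (1 : ℤ) : ℕ → ℤ)

def raisingPairs (n : ℕ) : Finset (ℕ × ℕ) := {p ∈ Icc 1 n ×ˢ Icc 1 n | p.1 < p.2}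

theorem mem_raisingPairs {n : ℕ} {p : ℕ × ℕ} :
    p ∈ raisingPairs n ↔ 1 ≤ p.1 ∧ p.1 < p.2 ∧ p.2 ≤ n := by
  simp only [raisingPairs, mem_filter, mem_product, mem_Icc]
  omega

theorem sum_raisingPairs {M : Type*} [AddCommMonoid M] (n : ℕ) (f : ℕ → ℕ → M) :
    ∑ p ∈ raisingPairs n, f p.1 p.2 = ∑ i ∈ Icc 1 n, ∑ j ∈ Icc (i + 1) n, f i j :=
  sum_finset_product' _ _ _ fun p => by simp only [mem_raisingPairs, mem_Icc]; omega

theorem prod_Icc_one_eq_prod_fin {M : Type*} [CommMonoid M] (n : ℕ) (g : ℕ → M) :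
    ∏ k ∈ Icc 1 n, g k = ∏ k : Fin n, g (k + 1) := by
  rw [Fin.prod_univ_eq_prod_range (fun k => g (k + 1)), range_eq_Ico, prod_Ico_add' g]
  rfl

theorem prod_raisingPairs_eq_prod_fin {M : Type*} [CommMonoid M] (n : ℕ) (F : ℕ × ℕ → M) :
    ∏ p ∈ raisingPairs n, F p = ∏ i : Fin n, ∏ j ∈ Ioi i, F (i + 1, j + 1) := by
  rw [prod_sigma']
  symm
  refine prod_bij (fun x _ => ((x.1 : ℕ) + 1, (x.2 : ℕ) + 1)) (fun x hx => ?_)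
    (fun x _ y _ hxy => ?_) (fun p hp => ?_) fun _ _ => rfl
  · simp only [mem_sigma, mem_univ, mem_Ioi, true_and] at hx
    rw [mem_raisingPairs]
    omega
  · simp only [Prod.mk.injEq, add_left_inj, Fin.val_inj] at hxy
    exact Sigma.ext hxy.1 (heq_of_eq hxy.2)
  · rw [mem_raisingPairs] at hp
    refine ⟨⟨⟨p.1 - 1, by omega⟩, ⟨p.2 - 1, by omega⟩⟩, ?_, ?_⟩
    · simp only [mem_sigma, mem_univ, mem_Ioi, true_and, Fin.mk_lt_mk]
      omega
    · ext <;> simp only <;> omega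

theorem sum_smul_single_succ_apply {n : ℕ} (f : Fin n → ℤ) (k : Fin n) :
    (∑ i : Fin n, f i • 𝐞 (i + 1)) (k + 1) = f k := by
  simp [Finset.sum_apply, Pi.single_apply, Fin.val_inj]

theorem sum_powerset_raisingPairs_eq_sum_perm {A : Type*} [CommRing A] (n : ℕ)
    (v : (ℕ → ℤ) → A) :
    ∑ t ∈ (raisingPairs n).powerset, (-1) ^ #t * v (∑ q ∈ t, (𝐞 q.1 - 𝐞 q.2)) =
      ∑ σ : Equiv.Perm (Fin n),
        (Equiv.Perm.sign σ : A) * v (∑ i : Fin n, ((σ i : ℤ) - i) • 𝐞 (i + 1)) := by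
  have h := congrArg ((AddMonoidAlgebra.basis (ℕ → ℤ) A).constr A v)
    ((prod_one_sub_single_eq_sum_powerset (raisingPairs n) fun q => 𝐞 q.1 - 𝐞 q.2).symm.trans
      ((prod_raisingPairs_eq_prod_fin n _).trans
        (prod_one_sub_single_eq_sum_perm fun i : Fin n => 𝐞 (i + 1))))
  simpa only [map_sum, constr_basis_single] using h

theorem sum_raisingPairs_mul_single_fst {n : ℕ} {b : ℕ → ℕ → ℕ} (hb : IsRaisMon n b) (k : ℕ) :
    ∑ q ∈ raisingPairs n, (b q.1 q.2 : ℤ) * 𝐞 q.1 k = ∑ j ∈ Icc (k + 1) n, (b k j : ℤ) := by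
  rw [sum_raisingPairs n fun i j => (b i j : ℤ) * 𝐞 i k]
  simp only [Pi.single_apply, mul_ite, mul_one, mul_zero, ← ite_sum_zero]
  rw [sum_ite_eq]
  split_ifs with hk
  · rfl
  · refine (sum_eq_zero fun j hj => ?_).symm
    rw [hb k j (by simp only [mem_Icc] at hk hj; omega), Nat.cast_zero]

theorem sum_raisingPairs_mul_single_snd {n : ℕ} {b : ℕ → ℕ → ℕ} (hb : IsRaisMon n b) (k : ℕ) :
    ∑ q ∈ raisingPairs n, (b q.1 q.2 : ℤ) * 𝐞 q.2 k = ∑ i ∈ Icc 1 (k - 1), (b i k : ℤ) := by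
  rw [sum_raisingPairs n fun i j => (b i j : ℤ) * 𝐞 j k]
  simp only [Pi.single_apply, mul_ite, mul_one, mul_zero, sum_ite_eq, ← sum_filter]
  refine sum_subset (fun i hi => ?_) fun i hi hi' => ?_
  · simp only [mem_filter, mem_Icc] at hi ⊢
    omega
  · simp only [mem_filter, mem_Icc] at hi hi'
    rw [hb i k (by omega), Nat.cast_zero]

theorem RapplyN_eq_add_sum {n : ℕ} {b : ℕ → ℕ → ℕ} (hb : IsRaisMon n b) (p : ℕ → ℤ) :
    RapplyN n b p = p + ∑ q ∈ raisingPairs n, (b q.1 q.2 : ℤ) • (𝐞 q.1 - 𝐞 q.2) := by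
  funext k
  simp only [RapplyN, Pi.add_apply, Finset.sum_apply, Pi.smul_apply, Pi.sub_apply, smul_eq_mul,
    mul_sub, sum_sub_distrib, sum_raisingPairs_mul_single_fst hb,
    sum_raisingPairs_mul_single_snd hb]
  ring

def pairIndicator (t : Finset (ℕ × ℕ)) : ℕ → ℕ → ℕ := fun i j => if (i, j) ∈ t then 1 else 0

theorem pairIndicator_injective : Function.Injective pairIndicator := by
  intro t t' h
  ext p
  have hp := congrFun (congrFun h p.1) p.2
  by_cases ht : p ∈ t <;> by_cases ht' : p ∈ t' <;> simp_all [pairIndicator]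

theorem isRaisMon_pairIndicator {n : ℕ} {t : Finset (ℕ × ℕ)} (ht : t ⊆ raisingPairs n) :
    IsRaisMon n (pairIndicator t) := fun _ _ hij =>
  if_neg fun hmem => hij (mem_raisingPairs.mp (ht hmem))

theorem sum_pairIndicator_smul {M : Type*} [AddCommMonoid M] {s t : Finset (ℕ × ℕ)} (ht : t ⊆ s)
    (f : ℕ × ℕ → M) : ∑ q ∈ s, pairIndicator t q.1 q.2 • f q = ∑ q ∈ t, f q := by
  simp only [pairIndicator, ite_smul, one_smul, zero_smul, sum_ite_mem, inter_eq_right.mpr ht]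

theorem degFam_pairIndicator {n : ℕ} {t : Finset (ℕ × ℕ)} (ht : t ⊆ raisingPairs n) :
    degFam n (pairIndicator t) = #t := by
  rw [degFam, ← sum_raisingPairs, card_eq_sum_ones, ← sum_pairIndicator_smul ht]
  simp only [smul_eq_mul, mul_one]

theorem RapplyN_pairIndicator {n : ℕ} {t : Finset (ℕ × ℕ)} (ht : t ⊆ raisingPairs n)
    (p : ℕ → ℤ) :
    RapplyN n (pairIndicator t) p = p + ∑ q ∈ t, (𝐞 q.1 - 𝐞 q.2) := by
  simp only [RapplyN_eq_add_sum (isRaisMon_pairIndicator ht), Nat.cast_smul_eq_nsmul,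
    sum_pairIndicator_smul ht]

theorem setOf_zeroOne_isRaisMon_eq_image (n : ℕ) :
    {b : ℕ → ℕ → ℕ | (∀ i j, b i j ≤ 1) ∧ IsRaisMon n b} =
      pairIndicator '' ((raisingPairs n).powerset : Set (Finset (ℕ × ℕ))) := by
  ext b
  constructor
  · rintro ⟨hb1, hb⟩
    refine ⟨{q ∈ raisingPairs n | b q.1 q.2 = 1}, mem_powerset.mpr (filter_subset _ _),
      funext₂ fun i j => ?_⟩
    have hb1ij := hb1 i j
    by_cases hij : (i, j) ∈ raisingPairs n
    · simp only [pairIndicator, mem_filter, hij, true_and]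
      split_ifs <;> omega
    · simp [pairIndicator, hij, hb i j (mt (mem_raisingPairs (p := (i, j))).mpr hij)]
  · rintro ⟨t, ht, rfl⟩
    rw [mem_coe, mem_powerset] at ht
    refine ⟨fun i j => ?_, isRaisMon_pairIndicator ht⟩
    unfold pairIndicator
    split_ifs <;> omega

theorem finsum_mem_zeroOne_isRaisMon_eq_sum_powerset {M : Type*} [AddCommMonoid M] (n : ℕ)
    (f : (ℕ → ℕ → ℕ) → M) :
    ∑ᶠ b ∈ {b : ℕ → ℕ → ℕ | (∀ i j, b i j ≤ 1) ∧ IsRaisMon n b}, f b =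
      ∑ t ∈ (raisingPairs n).powerset, f (pairIndicator t) := by
  rw [setOf_zeroOne_isRaisMon_eq_image, finsum_mem_image pairIndicator_injective.injOn,
    finsum_mem_coe_finset]

theorem schur_determinant_eq_raising_operator_general
    {A : Type*} [CommRing A] (ℓ : ℕ)
    (c : ℕ → ℤ → A)
    (lam : ℕ → ℤ) :
    Matrix.det (Matrix.of fun i j : Fin ℓ =>
        c (i.1 + 1) (lam (i.1 + 1) + (j.1 : ℤ) - (i.1 : ℤ)))
      = ∑ᶠ b ∈ {b : ℕ → ℕ → ℕ | (∀ i j, b i j ≤ 1) ∧ IsRaisMon ℓ b},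
          (-1 : A) ^ degFam ℓ b * ∏ k ∈ Finset.Icc 1 ℓ, c k (RapplyN ℓ b lam k) := by
  set v : (ℕ → ℤ) → A := fun a => ∏ k ∈ Icc 1 ℓ, c k (lam k + a k)
  have hfamilies : ∀ t ∈ (raisingPairs ℓ).powerset,
      (-1 : A) ^ degFam ℓ (pairIndicator t) *
          ∏ k ∈ Icc 1 ℓ, c k (RapplyN ℓ (pairIndicator t) lam k) =
        (-1) ^ #t * v (∑ q ∈ t, (𝐞 q.1 - 𝐞 q.2)) := fun t ht => by
    rw [mem_powerset] at ht
    rw [degFam_pairIndicator ht, RapplyN_pairIndicator ht]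
    rfl
  rw [finsum_mem_zeroOne_isRaisMon_eq_sum_powerset, sum_congr rfl hfamilies,
    sum_powerset_raisingPairs_eq_sum_perm, ← Matrix.det_transpose, Matrix.det_apply']
  refine sum_congr rfl fun σ _ => ?_
  simp only [v, prod_Icc_one_eq_prod_fin, sum_smul_single_succ_apply, Matrix.transpose_apply,
    Matrix.of_apply, add_sub_assoc]

/-- `A` is a commutative ring with elements `c i r` for `1 ≤ i ≤ ℓ`, `r ∈ ℤ`,
vanishing for `r < 0`.  For a partition `λ = (λ 1 ≥ ⋯ ≥ λ ℓ ≥ 0)`, the Schur determinant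
`Δ_λ(c) = det (c i (λ i + j - i))_{1 ≤ i,j ≤ ℓ}` equals
`Σ_b (-1)^{|b|} ∏_{k=1}^ℓ c k (R_b(λ) k)`, the sum over all `{0,1}`-families
`b = (b i j)_{1 ≤ i < j ≤ ℓ}`; that is, `Δ_λ(c)` is the evaluation of the raising operator
`R^{(ℓ)} = ∏_{1 ≤ i < j ≤ ℓ} (1 - R_{ij})` applied to `c 1 (λ 1) ⋯ c ℓ (λ ℓ)`. -/
theorem schur_determinant_eq_raising_operator
    {A : Type*} [CommRing A] (ℓ : ℕ) (hℓ : 1 ≤ ℓ)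
    (c : ℕ → ℤ → A) (hc : ∀ i r, r < 0 → c i r = 0)
    (lam : ℕ → ℤ)
    (hanti : ∀ i, 1 ≤ i → i < ℓ → lam (i + 1) ≤ lam i) (hpos : 0 ≤ lam ℓ) :
    Matrix.det (Matrix.of fun i j : Fin ℓ =>
        c (i.1 + 1) (lam (i.1 + 1) + (j.1 : ℤ) - (i.1 : ℤ)))
      = ∑ᶠ b ∈ {b : ℕ → ℕ → ℕ | (∀ i j, b i j ≤ 1) ∧ IsRaisMon ℓ b},
          (-1 : A) ^ degFam ℓ b * ∏ k ∈ Finset.Icc 1 ℓ, c k (RapplyN ℓ b lam k) :=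
  schur_determinant_eq_raising_operator_general ℓ c lam
end
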